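/- arXiv:1609.06901 — 4 statements merged into one kernel-verified Lean document; each statement's English description precedes it below -/
import Mathlib

section
/- Let M be the free metabelian Lie algebra on an ordered finite set X = {x_1 < x_2 < … < x_d} over a field k. Then the set of left-normed monomials [a_0, a_1, …, a_{n-1}] with a_i ∈ X, n ≥ 1, satisfying a_0 > a_1 ≤ a_2 ≤ … ≤ a_{n-1} (together with the elements of X themselves, for n = 1) forms a k-vector-space basis of M. -/
open FreeLieAlgebra

/-- The left-normed bracket `[a₀, a₁, …, a_{n-1}]` of a nonempty list, i.e.
`[[…[[a₀,a₁],a₂]…], a_{n-1}]`; defined as `0` on the empty list. -/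
def leftNormedList {L : Type*} [LieRing L] : List L → L
  | [] => 0
  | a :: rest => rest.foldl (fun x y => ⁅x, y⁆) a

/-- The admissibility condition of Bokut's basis: the list `[a₀, a₁, …, a_{n-1}]`
is nonempty, its tail is nondecreasing, and if it has length at least 2 then
`a₁ < a₀`. -/
def BokutAdmissible {d : ℕ} (l : List (Fin d)) : Prop :=
  l ≠ [] ∧ List.Chain' (· ≤ ·) l.tail ∧
    ∀ (h : 2 ≤ l.length), l.get ⟨1, by omega⟩ < l.get ⟨0, by omega⟩

/-!
Spanning. In a metabelian Lie algebra, `⁅⁅x, y⁆, z⁆ - ⁅⁅x, z⁆, y⁆ = ⁅x, ⁅y, z⁆⁆ = 0` whenever `x`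
is a bracket, so the letters of a left-normed monomial after the second one may be permuted freely.
Sorting them, and using the Jacobi identity `[a, b, c] = [a, c, b] - [b, c, a]` to bring the least
letter to the second place, expresses every monomial through admissible ones. Left-normed monomials
span, since the bracket of two of them is `±` a left-normed monomial or a bracket of two elements
of the derived algebra, hence `0`.

Independence. With `P = R[X_i]`, the semidirect sum `(ι → P) ⋊ P`, `P` acting by multiplication,
is metabelian, and `x_i ↦ (e_i, -X_i)` sends `[a, b, t…]` to `X^{b t} e_a - X^{a t} e_b`. For
admissible words the term `X^{b t} e_a` determines the word and does not occur in the image of any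
other admissible word, so the coefficient functionals of these terms are biorthogonal to the images.
-/

open LieAlgebra

section LeftNormed

variable {R L : Type*} [CommRing R] [LieRing L] [LieAlgebra R L]

theorem leftNormedList_cons_cons (x y : L) (t : List L) :
    leftNormedList (x :: y :: t) = leftNormedList (⁅x, y⁆ :: t) := rfl

theorem leftNormedList_append_singleton {l : List L} (hl : l ≠ []) (z : L) :
    leftNormedList (l ++ [z]) = ⁅leftNormedList l, z⁆ := by
  obtain ⟨x, t, rfl⟩ := List.exists_cons_of_ne_nil hl
  simp [leftNormedList, List.foldl_append]

theorem leftNormedList_cons_sub (x y : L) (t : List L) :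
    leftNormedList ((x - y) :: t) = leftNormedList (x :: t) - leftNormedList (y :: t) := by
  induction t generalizing x y with
  | nil => rfl
  | cons z t ih => simp only [leftNormedList_cons_cons, sub_lie, ih]

theorem leftNormedList_cons_zero (t : List L) : leftNormedList ((0 : L) :: t) = 0 := by
  simpa using leftNormedList_cons_sub (0 : L) 0 t

theorem leftNormedList_cons_neg (x : L) (t : List L) :
    leftNormedList (-x :: t) = -leftNormedList (x :: t) := by
  simpa [leftNormedList_cons_zero] using leftNormedList_cons_sub 0 x t

theorem leftNormedList_cons_cons_cons (x y z : L) (t : List L) :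
    leftNormedList (x :: y :: z :: t) =
      leftNormedList (x :: z :: y :: t) - leftNormedList (y :: z :: x :: t) := by
  have jacobi : ⁅⁅x, y⁆, z⁆ = ⁅⁅x, z⁆, y⁆ - ⁅⁅y, z⁆, x⁆ := by
    rw [lie_lie, ← lie_skew ⁅x, z⁆, ← lie_skew ⁅y, z⁆]; abel
  simp only [leftNormedList_cons_cons, jacobi, leftNormedList_cons_sub]

theorem leftNormedList_cons_mem {I : LieIdeal R L} {x : L} (hx : x ∈ I) (t : List L) :
    leftNormedList (x :: t) ∈ I := by
  induction t generalizing x with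
  | nil => exact hx
  | cons y t ih => exact ih (lie_mem_left R L I x y hx)

theorem LieHom.map_leftNormedList {L' : Type*} [LieRing L'] [LieAlgebra R L'] (f : L →ₗ⁅R⁆ L')
    (l : List L) : f (leftNormedList l) = leftNormedList (l.map f) :=
  match l with
  | [] => map_zero f
  | [x] => rfl
  | x :: y :: t => by
    rw [leftNormedList_cons_cons, LieHom.map_leftNormedList f (⁅x, y⁆ :: t), List.map_cons,
      LieHom.map_lie]
    rfl

end LeftNormed

section Metabelian

variable {R L : Type*} [CommRing R] [LieRing L] [LieAlgebra R L]

theorem lie_mem_derivedSeries_one (x y : L) : ⁅x, y⁆ ∈ derivedSeries R L 1 :=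
  LieSubmodule.lie_mem_lie (LieSubmodule.mem_top x) (LieSubmodule.mem_top y)

theorem leftNormedList_cons_cons_mem_derivedSeries_one (x y : L) (t : List L) :
    leftNormedList (x :: y :: t) ∈ derivedSeries R L 1 :=
  leftNormedList_cons_mem (lie_mem_derivedSeries_one x y) t

theorem derivedSeries_two_eq_bot_iff :
    derivedSeries R L 2 = ⊥ ↔
      ∀ x ∈ derivedSeries R L 1, ∀ y ∈ derivedSeries R L 1, ⁅x, y⁆ = 0 := by
  rw [eq_bot_iff, derivedSeries_def, derivedSeriesOfIdeal_succ, ← derivedSeries_def,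
    LieSubmodule.lie_le_iff]
  simp only [LieSubmodule.mem_bot]

variable (hL : derivedSeries R L 2 = ⊥)
include hL

theorem lie_eq_zero_of_mem_derivedSeries_one {x y : L} (hx : x ∈ derivedSeries R L 1)
    (hy : y ∈ derivedSeries R L 1) : ⁅x, y⁆ = 0 :=
  derivedSeries_two_eq_bot_iff.mp hL x hx y hy

theorem leftNormedList_cons_perm {x : L} (hx : x ∈ derivedSeries R L 1) {t t' : List L}
    (hp : t.Perm t') : leftNormedList (x :: t) = leftNormedList (x :: t') := by
  induction hp generalizing x with
  | nil => rfl
  | cons y _ ih => exact ih (lie_mem_left R L _ x y hx)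
  | swap y z t =>
    have h := lie_eq_zero_of_mem_derivedSeries_one hL hx (lie_mem_derivedSeries_one z y)
    rw [leibniz_lie, ← lie_skew z ⁅x, y⁆, ← sub_eq_add_neg, sub_eq_zero] at h
    simp only [leftNormedList_cons_cons, h]
  | trans _ _ ih₁ ih₂ => exact (ih₁ hx).trans (ih₂ hx)

end Metabelian

section Spanning

open Submodule

variable {R L ι : Type*} [CommRing R] [LieRing L] [LieAlgebra R L]

theorem LieSubalgebra.coe_lieSpan_eq_span_of_forall_lie_mem_span {s : Set L}
    (hs : ∀ x ∈ s, ∀ y ∈ s, ⁅x, y⁆ ∈ span R s) :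
    (LieSubalgebra.lieSpan R L s).toSubmodule = span R s := by
  suffices ∀ {x y}, x ∈ span R s → y ∈ span R s → ⁅x, y⁆ ∈ span R s by
    refine le_antisymm ?_ LieSubalgebra.submodule_span_le_lieSpan
    change _ ≤ ({ span R s with lie_mem' := this } : LieSubalgebra R L)
    exact LieSubalgebra.lieSpan_le.mpr subset_span
  intro x y hx hy
  induction hx, hy using span_induction₂ with
  | mem_mem x y hx hy => exact hs x hx y hy
  | zero_left y _ => simp
  | zero_right x _ => simp
  | add_left x y z _ _ _ hx hy => simpa using add_mem hx hy
  | add_right x y z _ _ _ hx hy => simpa using add_mem hx hy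
  | smul_left r x y _ _ h => simpa using smul_mem _ r h
  | smul_right r x y _ _ h => simpa using smul_mem _ r h

variable (hL : derivedSeries R L 2 = ⊥) (g : ι → L)
include hL

theorem lie_leftNormedList_mem_span (l l' : List ι) :
    ⁅leftNormedList (l.map g), leftNormedList (l'.map g)⁆ ∈
      span R (Set.range fun l : List ι => leftNormedList (l.map g)) := by
  match l, l' with
  | [], _ => simp [leftNormedList]
  | _, [] => simp [leftNormedList]
  | a :: s, [c] =>
    rw [show leftNormedList ([c].map g) = g c from rfl,
      ← leftNormedList_append_singleton (by simp), ← List.map_singleton, ← List.map_append]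
    exact subset_span ⟨_, rfl⟩
  | [a], c :: e :: t =>
    rw [show leftNormedList ([a].map g) = g a from rfl, ← lie_skew,
      ← leftNormedList_append_singleton (by simp), ← List.map_singleton, ← List.map_append]
    exact neg_mem (subset_span ⟨_, rfl⟩)
  | a :: b :: s, c :: e :: t =>
    simp only [List.map_cons]
    rw [lie_eq_zero_of_mem_derivedSeries_one hL
      (leftNormedList_cons_cons_mem_derivedSeries_one _ _ _)
      (leftNormedList_cons_cons_mem_derivedSeries_one _ _ _)]
    exact zero_mem _

theorem span_leftNormedList_eq_top (hg : LieSubalgebra.lieSpan R L (Set.range g) = ⊤) :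
    span R (Set.range fun l : List ι => leftNormedList (l.map g)) = ⊤ := by
  rw [← LieSubalgebra.coe_lieSpan_eq_span_of_forall_lie_mem_span, eq_top_iff,
    ← LieSubalgebra.top_toSubmodule, ← hg]
  · exact LieSubalgebra.lieSpan_mono (Set.range_subset_iff.mpr fun i => ⟨[i], rfl⟩)
  · rintro _ ⟨l, rfl⟩ _ ⟨l', rfl⟩
    exact lie_leftNormedList_mem_span hL g l l'

end Spanning

section Bokut

open Submodule

variable {d : ℕ}

theorem bokutAdmissible_singleton (a : Fin d) : BokutAdmissible [a] :=
  ⟨List.cons_ne_nil a [], List.isChain_nil, fun h => by simp at h⟩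

theorem BokutAdmissible.pairwise_tail {l : List (Fin d)} (h : BokutAdmissible l) :
    l.tail.Pairwise (· ≤ ·) :=
  List.isChain_iff_pairwise.mp h.2.1

theorem bokutAdmissible_cons_cons_iff {a b : Fin d} {t : List (Fin d)} :
    BokutAdmissible (a :: b :: t) ↔ b < a ∧ (b :: t).Pairwise (· ≤ ·) :=
  ⟨fun h => ⟨h.2.2 (by simp), h.pairwise_tail⟩,
    fun ⟨hba, ht⟩ => ⟨List.cons_ne_nil _ _, List.isChain_iff_pairwise.mpr ht, fun _ => hba⟩⟩

theorem BokutAdmissible.eq_of_perm {a : Fin d} {s s' : List (Fin d)}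
    (h : BokutAdmissible (a :: s)) (h' : BokutAdmissible (a :: s')) (hp : s.Perm s') : s = s' :=
  hp.eq_of_pairwise' h.pairwise_tail h'.pairwise_tail

theorem BokutAdmissible.not_perm {a a' : Fin d} {s t' : List (Fin d)}
    (h : BokutAdmissible (a :: s)) (h' : BokutAdmissible (a' :: a :: t')) :
    ¬ s.Perm (a' :: t') := by
  intro hp
  cases s with
  | nil => simp at hp
  | cons b t =>
    have hba : b < a := (bokutAdmissible_cons_cons_iff.mp h).1
    obtain ⟨haa', ha⟩ := bokutAdmissible_cons_cons_iff.mp h'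
    have hab : a ≤ b := by
      rcases List.mem_cons.mp (hp.subset List.mem_cons_self) with rfl | hb
      · exact haa'.le
      · exact List.rel_of_pairwise_cons ha hb
    exact (hab.trans_lt hba).false

variable (R : Type*) {L : Type*} [CommRing R] [LieRing L] [LieAlgebra R L] (g : Fin d → L)

def bokutSpan : Submodule R L :=
  span R (Set.range fun l : {l : List (Fin d) // BokutAdmissible l} => leftNormedList (l.1.map g))

variable {R} (hL : derivedSeries R L 2 = ⊥)
include hL

theorem leftNormedList_mem_bokutSpan_of_lt_of_le {a c : Fin d} (hca : c < a) {s : List (Fin d)}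
    (hs : ∀ x ∈ s, c ≤ x) : leftNormedList (g a :: g c :: s.map g) ∈ bokutSpan R g := by
  set s' := s.insertionSort (· ≤ ·)
  have hp : s'.Perm s := List.perm_insertionSort _ s
  have hadm : BokutAdmissible (a :: c :: s') := bokutAdmissible_cons_cons_iff.mpr
    ⟨hca, List.pairwise_cons.mpr ⟨fun x hx => hs x (hp.subset hx), List.pairwise_insertionSort _ s⟩⟩
  rw [leftNormedList_cons_cons,
    leftNormedList_cons_perm hL (lie_mem_derivedSeries_one _ _) (hp.symm.map g)]
  exact subset_span ⟨⟨_, hadm⟩, rfl⟩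

theorem leftNormedList_mem_bokutSpan_of_lt {a b : Fin d} (hba : b < a) (t : List (Fin d)) :
    leftNormedList (g a :: g b :: t.map g) ∈ bokutSpan R g := by
  by_cases hb : ∀ x ∈ t, b ≤ x
  · exact leftNormedList_mem_bokutSpan_of_lt_of_le g hL hba hb
  obtain ⟨x, hx, hxb⟩ : ∃ x ∈ t, x < b := by simpa using hb
  -- Move the least letter `c` of `t` to the front; Jacobi for `⁅⁅a, b⁆, c⁆` then leaves two
  -- monomials whose second letter `c` is below all the others.
  have ht : t ≠ [] := List.ne_nil_of_mem hx
  set c := t.min ht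
  have hc : ∀ y ∈ t, c ≤ y := fun y hy => List.min_le_of_mem hy
  have hcb : c < b := (hc x hx).trans_lt hxb
  have hrest : ∀ y ∈ t.erase c, c ≤ y := fun y hy => hc y (List.mem_of_mem_erase hy)
  rw [leftNormedList_cons_cons, leftNormedList_cons_perm hL (lie_mem_derivedSeries_one _ _)
    ((List.perm_cons_erase (List.min_mem ht)).map g), List.map_cons, ← leftNormedList_cons_cons,
    leftNormedList_cons_cons_cons]
  exact sub_mem
    (leftNormedList_mem_bokutSpan_of_lt_of_le g hL (hcb.trans hba)
      (List.forall_mem_cons.mpr ⟨hcb.le, hrest⟩))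
    (leftNormedList_mem_bokutSpan_of_lt_of_le g hL hcb
      (List.forall_mem_cons.mpr ⟨(hcb.trans hba).le, hrest⟩))

theorem leftNormedList_mem_bokutSpan (l : List (Fin d)) :
    leftNormedList (l.map g) ∈ bokutSpan R g :=
  match l with
  | [] => zero_mem _
  | [a] => subset_span ⟨⟨[a], bokutAdmissible_singleton a⟩, rfl⟩
  | a :: b :: t => by
    rcases lt_trichotomy b a with h | rfl | h
    · exact leftNormedList_mem_bokutSpan_of_lt g hL h t
    · rw [List.map_cons, List.map_cons, leftNormedList_cons_cons, lie_self,
        leftNormedList_cons_zero]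
      exact zero_mem _
    · rw [List.map_cons, List.map_cons, leftNormedList_cons_cons, ← lie_skew,
        leftNormedList_cons_neg, ← leftNormedList_cons_cons]
      exact neg_mem (leftNormedList_mem_bokutSpan_of_lt g hL h t)

theorem bokutSpan_eq_top (hg : LieSubalgebra.lieSpan R L (Set.range g) = ⊤) :
    bokutSpan R g = ⊤ :=
  eq_top_iff.mpr <| (span_leftNormedList_eq_top hL g hg).ge.trans <|
    span_le.mpr <| Set.range_subset_iff.mpr (leftNormedList_mem_bokutSpan g hL)

end Bokut

section Quotient

variable {R L : Type*} [CommRing R] [LieRing L] [LieAlgebra R L]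

def LieIdeal.quotientMk (I : LieIdeal R L) : L →ₗ⁅R⁆ L ⧸ I :=
  { (LieSubmodule.Quotient.mk' I : L →ₗ[R] L ⧸ I) with map_lie' := rfl }

theorem LieIdeal.quotientMk_surjective (I : LieIdeal R L) : Function.Surjective I.quotientMk :=
  LieSubmodule.Quotient.surjective_mk' I

theorem LieIdeal.ker_quotientMk (I : LieIdeal R L) : I.quotientMk.ker = I := by
  ext x
  exact LieSubmodule.Quotient.mk_eq_zero' (N := I)

theorem derivedSeries_quotient_derivedSeries_eq_bot (k : ℕ) :
    derivedSeries R (L ⧸ derivedSeries R L k) k = ⊥ := by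
  rw [← LieIdeal.derivedSeries_map_eq k (LieIdeal.quotientMk_surjective _),
    LieIdeal.map_eq_bot_iff, LieIdeal.ker_quotientMk]

theorem FreeLieAlgebra.lieSpan_range_of (X : Type*) :
    LieSubalgebra.lieSpan R (FreeLieAlgebra R X) (Set.range (of R)) = ⊤ := by
  set A := LieSubalgebra.lieSpan R (FreeLieAlgebra R X) (Set.range (of R))
  let g : FreeLieAlgebra R X →ₗ⁅R⁆ A :=
    lift R fun x => ⟨of R x, LieSubalgebra.subset_lieSpan ⟨x, rfl⟩⟩
  have hg : A.incl.comp g = LieHom.id := hom_ext fun x => by simp [g]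
  refine eq_top_iff.mpr fun x _ => ?_
  rw [← LieHom.id_apply (R := R) x, ← hg]
  exact (g x).2

end Quotient

theorem top_le_span_mk_leftNormedList {R : Type*} [CommRing R] {d : ℕ} :
    ⊤ ≤ Submodule.span R (Set.range fun l : {l : List (Fin d) // BokutAdmissible l} =>
      LieSubmodule.Quotient.mk (N := derivedSeries R (FreeLieAlgebra R (Fin d)) 2)
        (leftNormedList (l.1.map (of R)))) := by
  set π := (derivedSeries R (FreeLieAlgebra R (Fin d)) 2).quotientMk
  have hgen : LieSubalgebra.lieSpan R _ (Set.range (π ∘ of R)) = ⊤ := by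
    rw [Set.range_comp, ← LieSubalgebra.map_lieSpan, FreeLieAlgebra.lieSpan_range_of,
      ← LieSubalgebra.map_top, LieHom.range_eq_top]
    exact LieIdeal.quotientMk_surjective _
  have := bokutSpan_eq_top (π ∘ of R) (derivedSeries_quotient_derivedSeries_eq_bot 2) hgen
  simp only [bokutSpan, ← List.map_map, ← LieHom.map_leftNormedList] at this
  exact this.ge

theorem linearIndependent_of_biorthogonal {R M ι : Type*} [Ring R] [AddCommGroup M] [Module R M]
    [DecidableEq ι] {v : ι → M} (f : ι → M →ₗ[R] R)
    (h : ∀ i j, f i (v j) = if i = j then 1 else 0) : LinearIndependent R v := by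
  rw [linearIndependent_iff']
  intro s c hsum i hi
  simpa [h, hi] using congrArg (f i) hsum

section Magnus

open MvPolynomial SemiDirectSum

attribute [local instance] LieRing.ofAssociativeRing LieAlgebra.ofAssociativeAlgebra

theorem lie_eq_zero_of_commRing {A : Type*} [CommRing A] (a b : A) : ⁅a, b⁆ = 0 := by
  rw [LieRing.of_associative_ring_bracket, mul_comm, sub_self]

variable (R ι : Type*) [CommRing R]

noncomputable def mulLieDerivation :
    MvPolynomial ι R →ₗ⁅R⁆ LieDerivation R (ι → MvPolynomial ι R) (ι → MvPolynomial ι R) where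
  toFun a :=
    { toFun := fun p => a • p
      map_add' := smul_add a
      map_smul' := fun r p => smul_comm a r p
      leibniz' := fun p q => by simp [lie_eq_zero_of_commRing] }
  map_add' a b := by ext; simp [add_smul]
  map_smul' r a := by ext; simp
  map_lie' {a b} := by ext p : 1; simp [lie_eq_zero_of_commRing, smul_smul, mul_comm]

abbrev MagnusLieAlgebra := (ι → MvPolynomial ι R) ⋊⁅mulLieDerivation R ι⁆ MvPolynomial ι R

namespace MagnusLieAlgebra

variable {R ι}

theorem lie_def (x y : MagnusLieAlgebra R ι) :
    ⁅x, y⁆ = ⟨x.right • y.left - y.right • x.left, 0⟩ := by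
  simp [lie_eq_zero_of_commRing, mulLieDerivation]
  rfl

theorem right_eq_zero_of_mem_derivedSeries_one {x : MagnusLieAlgebra R ι}
    (hx : x ∈ derivedSeries R (MagnusLieAlgebra R ι) 1) : x.right = 0 := by
  suffices derivedSeries R (MagnusLieAlgebra R ι) 1 ≤ (projr (mulLieDerivation R ι)).ker from
    this hx
  rw [derivedSeries_def, derivedSeriesOfIdeal_succ, derivedSeriesOfIdeal_zero,
    LieSubmodule.lie_le_iff]
  intro x _ y _
  simp [lie_eq_zero_of_commRing]

theorem derivedSeries_two_eq_bot : derivedSeries R (MagnusLieAlgebra R ι) 2 = ⊥ := by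
  refine derivedSeries_two_eq_bot_iff.mpr fun x hx y hy => ?_
  rw [lie_def, right_eq_zero_of_mem_derivedSeries_one hx, right_eq_zero_of_mem_derivedSeries_one hy,
    zero_smul, zero_smul, sub_zero]
  rfl

variable [DecidableEq ι]

theorem monomial_toFinsupp_cons (c : ι) (s : Multiset ι) :
    monomial (Multiset.toFinsupp (c ::ₘ s)) (1 : R) = X c * monomial (Multiset.toFinsupp s) 1 := by
  rw [← Multiset.singleton_add, Multiset.toFinsupp_add, Multiset.toFinsupp_singleton, X,
    monomial_mul, one_mul]

variable (R) in
noncomputable def gen (i : ι) : MagnusLieAlgebra R ι := ⟨Pi.single i 1, -X i⟩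

theorem lie_gen (p : ι → MvPolynomial ι R) (c : ι) :
    ⁅(⟨p, 0⟩ : MagnusLieAlgebra R ι), gen R c⁆ = ⟨(X c : MvPolynomial ι R) • p, 0⟩ := by
  rw [lie_def]
  simp [gen]

theorem leftNormedList_cons_map_gen (p : ι → MvPolynomial ι R) (t : List ι) :
    leftNormedList ((⟨p, 0⟩ : MagnusLieAlgebra R ι) :: t.map (gen R)) =
      ⟨monomial (Multiset.toFinsupp (t : Multiset ι)) (1 : R) • p, 0⟩ := by
  induction t generalizing p with
  | nil =>
    simp [leftNormedList]
  | cons c t ih =>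
    rw [List.map_cons, leftNormedList_cons_cons, lie_gen, ih, smul_smul, ← Multiset.cons_coe,
      monomial_toFinsupp_cons, mul_comm]

theorem leftNormedList_map_gen_cons_cons (a b : ι) (t : List ι) :
    leftNormedList ((a :: b :: t).map (gen R)) =
      ⟨monomial (Multiset.toFinsupp ↑(b :: t)) (1 : R) • Pi.single a 1 -
        monomial (Multiset.toFinsupp ↑(a :: t)) (1 : R) • Pi.single b 1, 0⟩ := by
  have : ⁅gen R a, gen R b⁆ =
      (⟨X b • Pi.single a 1 - X a • Pi.single b 1, 0⟩ : MagnusLieAlgebra R ι) := by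
    rw [lie_def]
    simp [gen, neg_add_eq_sub]
  rw [List.map_cons, List.map_cons, leftNormedList_cons_cons, this, leftNormedList_cons_map_gen,
    ← Multiset.cons_coe, ← Multiset.cons_coe, monomial_toFinsupp_cons, monomial_toFinsupp_cons,
    smul_sub, smul_smul, smul_smul, mul_comm, mul_comm (monomial _ _)]

variable (R) in
noncomputable def coordinate (a : ι) (s : Multiset ι) :
    MagnusLieAlgebra R ι →ₗ[R] R where
  toFun x := coeff (Multiset.toFinsupp s) (x.left a)
  map_add' x y := by simp
  map_smul' r x := by simp

theorem coordinate_leftNormedList_map_gen {d : ℕ} {a a' : Fin d} {s s' : List (Fin d)}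
    (h : BokutAdmissible (a :: s)) (h' : BokutAdmissible (a' :: s')) :
    coordinate R a s (leftNormedList ((a' :: s').map (gen R))) =
      if a :: s = a' :: s' then 1 else 0 := by
  match s' with
  | [] =>
    by_cases ha : a = a'
    · simp [coordinate, gen, leftNormedList, ha, coeff_one, eq_comm (a := (0 : Fin d →₀ ℕ))]
    · simp [coordinate, gen, leftNormedList, ha]
  | b' :: t' =>
    have cross : coeff (Multiset.toFinsupp ↑s) (if a = b' then
        monomial (Multiset.toFinsupp (a' :: t' : Multiset (Fin d))) (1 : R) else 0) = 0 := by
      split_ifs with hab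
      · subst hab
        rw [coeff_monomial, if_neg]
        simpa [Multiset.coe_eq_coe] using fun hp => h.not_perm h' hp.symm
      · exact coeff_zero _
    rw [leftNormedList_map_gen_cons_cons]
    by_cases ha : a = a'
    · subst ha
      have hperm : (b' :: t').Perm s ↔ s = b' :: t' :=
        ⟨fun hp => h.eq_of_perm h' hp.symm, by rintro rfl; rfl⟩
      simp [coordinate, Pi.single_apply, cross, coeff_monomial, hperm]
    · simp [coordinate, Pi.single_apply, cross, ha]

theorem linearIndependent_leftNormedList_map_gen {d : ℕ} :
    LinearIndependent R fun l : {l : List (Fin d) // BokutAdmissible l} =>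
      leftNormedList (l.1.map (gen R)) := by
  refine linearIndependent_of_biorthogonal
    (fun l => coordinate R (l.1.head l.2.1) l.1.tail) fun ⟨l, hl⟩ ⟨l', hl'⟩ => ?_
  obtain ⟨a, s, rfl⟩ := List.exists_cons_of_ne_nil hl.1
  obtain ⟨a', s', rfl⟩ := List.exists_cons_of_ne_nil hl'.1
  simpa [Subtype.ext_iff] using coordinate_leftNormedList_map_gen hl hl'

end MagnusLieAlgebra

variable {R} in
open MagnusLieAlgebra in
theorem linearIndependent_mk_leftNormedList {d : ℕ} :
    LinearIndependent R fun l : {l : List (Fin d) // BokutAdmissible l} =>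
      LieSubmodule.Quotient.mk (N := derivedSeries R (FreeLieAlgebra R (Fin d)) 2)
        (leftNormedList (l.1.map (of R))) := by
  let φ := FreeLieAlgebra.lift R (gen R (ι := Fin d))
  have hker : (derivedSeries R (FreeLieAlgebra R (Fin d)) 2).toSubmodule ≤
      LinearMap.ker (φ : FreeLieAlgebra R (Fin d) →ₗ[R] MagnusLieAlgebra R (Fin d)) := by
    intro x hx
    have := LieIdeal.derivedSeries_map_le (f := φ) 2 (LieIdeal.mem_map hx)
    rwa [derivedSeries_two_eq_bot, LieSubmodule.mem_bot] at this
  refine LinearIndependent.of_comp (Submodule.liftQ _ _ hker) ?_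
  have hcomp : ∀ l : List (Fin d), Submodule.liftQ _ _ hker
      (LieSubmodule.Quotient.mk (leftNormedList (l.map (of R)))) =
        leftNormedList (l.map (gen R)) := by
    intro l
    simp [φ, LieHom.map_leftNormedList, Function.comp_def]
  simpa only [Function.comp_def, hcomp] using linearIndependent_leftNormedList_map_gen

end Magnus

/-- The left-normed monomials `[a₀, a₁, …, a_{n-1}]` (`aᵢ` generators, `n ≥ 1`)
with `a₀ > a₁ ≤ a₂ ≤ … ≤ a_{n-1}` form a basis of the free metabelian Lie algebra
`M = L_X / L_X⁽²⁾` on `X = {x₁ < … < x_d}`. -/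
theorem free_metabelian_basis (k : Type*) [Field k] (d : ℕ) :
    ∃ b : Module.Basis {l : List (Fin d) // BokutAdmissible l} k
        ((FreeLieAlgebra k (Fin d)) ⧸ (LieAlgebra.derivedSeries k (FreeLieAlgebra k (Fin d)) 2)),
      ∀ l : {l : List (Fin d) // BokutAdmissible l},
        b l = LieSubmodule.Quotient.mk
          (N := (LieAlgebra.derivedSeries k (FreeLieAlgebra k (Fin d)) 2))
          (leftNormedList ((l : List (Fin d)).map (FreeLieAlgebra.of k))) :=
  ⟨.mk linearIndependent_mk_leftNormedList top_le_span_mk_leftNormedList,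
    fun _ => Module.Basis.mk_apply _ _ _⟩
end

section
/- The number of basis monomials of length m ≥ 3 in the free metabelian Lie algebra on d ordered generators equals ∑_{j=1}^{d-1} (d-j) · C(m-2+d-j, d-j), where C denotes the binomial coefficient. -/
/-!
Removing the head `a₀` of a Bokut tuple leaves a monotone tuple of length `m - 1` starting at
`t = a₁`, and `a₀` ranges over the `d - 1 - t` letters above `t`. A monotone tuple starting at `t`
is `t` followed by a monotone tuple of length `m - 2` in the `d - t` letters `≥ t`. Splitting
monotone tuples by their first entry in the same way shows, by induction on the length, that they
are counted by stars and bars: `multichoose (d - t) (m - 2) = C(m - 3 + d - t, d - t - 1)`.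
Substituting `j = t + 1` gives the formula.
-/

open Finset

theorem Fin.monotone_cons_iff {α : Type*} [Preorder α] {n : ℕ} {a : α} {f : Fin n → α} :
    Monotone (Fin.cons a f : Fin (n + 1) → α) ↔ (∀ i, a ≤ f i) ∧ Monotone f := by
  rw [monotone_iff_forall_lt, monotone_iff_forall_lt]
  exact Fin.liftFun_cons (· ≤ ·)

theorem Fin.forall_le_imp_le_iff_monotone_tail {α : Type*} [Preorder α] {n : ℕ}
    (f : Fin (n + 1) → α) :
    (∀ i j : Fin (n + 1), 1 ≤ (i : ℕ) → i ≤ j → f i ≤ f j) ↔ Monotone (Fin.tail f) := by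
  refine ⟨fun h i j hij => h i.succ j.succ (by simp) (Fin.succ_le_succ_iff.mpr hij), ?_⟩
  intro h i j hi hij
  obtain ⟨i, rfl⟩ := Fin.exists_succ_eq.mpr (Fin.ne_of_gt (Fin.lt_def.mpr hi))
  obtain ⟨j, rfl⟩ := Fin.exists_succ_eq.mpr (Fin.ne_of_gt ((Fin.succ_pos i).trans_le hij))
  exact h (Fin.succ_le_succ_iff.mp hij)

theorem Fintype.card_subtype_eq_sum_card_fiber {ι β : Type*} [Fintype ι] [Fintype β]
    [DecidableEq β] (p : ι → Prop) [DecidablePred p] (g : ι → β) :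
    Fintype.card {x // p x} = ∑ b, Fintype.card {x // p x ∧ g x = b} := by
  simp only [Fintype.card_subtype, ← Finset.filter_filter]
  exact card_eq_sum_card_fiberwise fun _ _ => mem_univ _

theorem Nat.sum_range_multichoose_sub (k n : ℕ) :
    ∑ i ∈ range k, (k - i).multichoose n = k.multichoose (n + 1) := by
  induction k with
  | zero => simp
  | succ k ih =>
    rw [sum_range_succ', Nat.multichoose_succ_succ, ← ih]
    simp

theorem sum_range_mul_multichoose_eq_sum_Icc_mul_choose (d n : ℕ) :
    ∑ t ∈ range d, (d - 1 - t) * (d - t).multichoose n =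
      ∑ j ∈ Icc 1 (d - 1), (d - j) * (n + d - j).choose (d - j) := by
  obtain _ | e := d
  · simp
  rw [sum_range_succ, Nat.add_sub_cancel, ← Ico_add_one_right_eq_Icc, sum_Ico_eq_sum_range]
  simp only [Nat.add_sub_cancel, Nat.sub_self, zero_mul, add_zero]
  refine sum_congr rfl fun t ht => ?_
  have ht : t < e := mem_range.mp ht
  rw [Nat.multichoose_eq, show e + 1 - t + n - 1 = n + (e - t) by omega, Nat.choose_symm_add,
    show n + (e + 1) - (1 + t) = n + (e - t) by omega, show e + 1 - (1 + t) = e - t by omega]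

section MonotoneTuples

variable {α : Type*}

def monotoneConsEquiv [Preorder α] (n : ℕ) (a : α) :
    {f : Fin (n + 1) → α // Monotone f ∧ f 0 = a} ≃ {g : Fin n → Set.Ici a // Monotone g} where
  toFun f := ⟨fun i => ⟨f.1 i.succ, f.2.2.symm.trans_le (f.2.1 (Fin.zero_le _))⟩,
    fun _ _ hij => f.2.1 (Fin.succ_le_succ_iff.mpr hij)⟩
  invFun g := ⟨Fin.cons a (fun i => (g.1 i).1),
    Fin.monotone_cons_iff.mpr ⟨fun i => (g.1 i).2, Subtype.mono_coe _ |>.comp g.2⟩, rfl⟩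
  left_inv f := by
    obtain ⟨f, hf, rfl⟩ := f
    exact Subtype.ext (Fin.cons_self_tail f)
  right_inv _ := rfl

theorem card_monotone_succ [Fintype α] [Preorder α] [DecidableLE α] (n : ℕ) :
    Fintype.card {f : Fin (n + 1) → α // Monotone f} =
      ∑ a : α, Fintype.card {g : Fin n → Set.Ici a // Monotone g} := by
  classical
  rw [Fintype.card_subtype_eq_sum_card_fiber _ fun f : Fin (n + 1) → α => f 0]
  exact sum_congr rfl fun a _ => Fintype.card_congr (monotoneConsEquiv n a)

theorem sum_multichoose_card_Ici [Fintype α] [LinearOrder α] (n : ℕ) :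
    ∑ a : α, (Fintype.card (Set.Ici a)).multichoose n = (Fintype.card α).multichoose (n + 1) := by
  set e := monoEquivOfFin α rfl
  have card_Ici (t : Fin (Fintype.card α)) : Fintype.card (Set.Ici (e t)) = Fintype.card α - t := by
    rw [← Fintype.card_congr (e.Ici t).toEquiv, Fintype.card_Ici, Fin.card_Ici]
  rw [← e.toEquiv.sum_comp]
  simp only [OrderIso.coe_toEquiv, card_Ici]
  rw [Fin.sum_univ_eq_sum_range (fun i => (Fintype.card α - i).multichoose n),
    Nat.sum_range_multichoose_sub]

theorem card_monotone_eq_multichoose (n : ℕ) :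
    ∀ (α : Type*) [Fintype α] [LinearOrder α],
      Fintype.card {f : Fin n → α // Monotone f} = (Fintype.card α).multichoose n := by
  induction n with
  | zero =>
    intro α _ _
    rw [Nat.multichoose_zero_right, Fintype.card_eq_one_iff]
    exact ⟨⟨finZeroElim, fun a => a.elim0⟩, fun _ => Subsingleton.elim _ _⟩
  | succ n ih =>
    intro α _ _
    rw [card_monotone_succ, ← sum_multichoose_card_Ici]
    exact sum_congr rfl fun a _ => ih (Set.Ici a)

def bokutFiberEquiv [Preorder α] (n : ℕ) (t : α) :
    {f : Fin (n + 2) → α // (f 1 < f 0 ∧ Monotone (Fin.tail f)) ∧ f 1 = t} ≃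
      Set.Ioi t × {g : Fin (n + 1) → α // Monotone g ∧ g 0 = t} where
  toFun f := (⟨f.1 0, f.2.2.symm.trans_lt f.2.1.1⟩, ⟨Fin.tail f.1, f.2.1.2, f.2.2⟩)
  invFun p := ⟨Fin.cons p.1.1 p.2.1, ⟨p.2.2.2.trans_lt p.1.2, p.2.2.1⟩, p.2.2.2⟩
  left_inv f := Subtype.ext (Fin.cons_self_tail f.1)
  right_inv _ := rfl

theorem card_bokut [Fintype α] [LinearOrder α] (n : ℕ) :
    Fintype.card {f : Fin (n + 2) → α // f 1 < f 0 ∧ Monotone (Fin.tail f)} =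
      ∑ t : α, Fintype.card (Set.Ioi t) * (Fintype.card (Set.Ici t)).multichoose n := by
  classical
  rw [Fintype.card_subtype_eq_sum_card_fiber _ fun f : Fin (n + 2) → α => f 1]
  refine sum_congr rfl fun t _ => ?_
  rw [Fintype.card_congr (bokutFiberEquiv n t), Fintype.card_prod,
    Fintype.card_congr (monotoneConsEquiv n t), card_monotone_eq_multichoose]

end MonotoneTuples

theorem card_bokut_fin (d n : ℕ) :
    Fintype.card {f : Fin (n + 2) → Fin d // f 1 < f 0 ∧ Monotone (Fin.tail f)} =
      ∑ t ∈ range d, (d - 1 - t) * (d - t).multichoose n := by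
  simp only [card_bokut, Fintype.card_Ioi, Fintype.card_Ici, Fin.card_Ioi, Fin.card_Ici]
  exact Fin.sum_univ_eq_sum_range (fun t => (d - 1 - t) * (d - t).multichoose n) d

/-- The number of Bokut basis monomials `[a₀, a₁, …, a_{m-1}]` of length `m ≥ 3`
in the free metabelian Lie algebra on `d` ordered generators — i.e. of tuples
over `Fin d` with `a₀ > a₁ ≤ a₂ ≤ … ≤ a_{m-1}` — equals
`∑_{j=1}^{d-1} (d-j) · C(m-2+d-j, d-j)`. -/
theorem count_bokut_monomials (d m : ℕ) (hm : 3 ≤ m) :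
    Fintype.card {f : Fin m → Fin d //
        f ⟨1, by omega⟩ < f ⟨0, by omega⟩ ∧
        ∀ i j : Fin m, 1 ≤ (i : ℕ) → i ≤ j → f i ≤ f j} =
      ∑ j ∈ Finset.Icc 1 (d - 1), (d - j) * Nat.choose (m - 2 + d - j) (d - j) := by
  obtain ⟨n, rfl⟩ : ∃ n, m = n + 2 := ⟨m - 2, by omega⟩
  have isBokut_iff (f : Fin (n + 2) → Fin d) :
      (f ⟨1, by omega⟩ < f ⟨0, by omega⟩ ∧ ∀ i j : Fin (n + 2), 1 ≤ (i : ℕ) → i ≤ j → f i ≤ f j) ↔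
        f 1 < f 0 ∧ Monotone (Fin.tail f) :=
    and_congr Iff.rfl (Fin.forall_le_imp_le_iff_monotone_tail f)
  rw [Fintype.card_congr (Equiv.subtypeEquivRight isBokut_iff), card_bokut_fin,
    Nat.add_sub_cancel, sum_range_mul_multichoose_eq_sum_Icc_mul_choose]
end

section
/- Let L be a Lie algebra over a field of characteristic ≠ 2, and let a, b, t, u ∈ L satisfy [a,b] = 0, [[a,t],b] = 0, [[b,t],a] = 0, [t,u] = 0, [a,u] = [[a,t],t], and [b,u] = [[b,t],t]. Writing a_i = [a, t, …, t] (i copies of t, left-normed) and b_j = [b, t, …, t], one has [a_1, b_1] = 0. -/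
/-!
Two applications of the Jacobi identity give `[a₁, b₁] = [a, b₂]`: move `b` past `a₁`
(they commute), use `[a, u] = a₂`, then move `b` past `a` and use `[b, u] = b₂`. Symmetrically,
since `b₁` commutes with `a`, `[b₁, a₁] = [a, b₂]`. Thus `[a₁, b₁]` equals its own negative, and
it vanishes because `2` is invertible.
-/

theorem lie_lie_comm_of_lie_eq_zero {L : Type*} [LieRing L] {x y : L} (h : ⁅x, y⁆ = 0) (z : L) :
    ⁅x, ⁅y, z⁆⁆ = ⁅y, ⁅x, z⁆⁆ := by
  rw [leibniz_lie, h, zero_lie, zero_add]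

theorem eq_zero_of_eq_neg_of_two_ne_zero {k M : Type*} [DivisionRing k] [AddCommGroup M]
    [Module k M] (hchar : (2 : k) ≠ 0) {x : M} (h : x = -x) : x = 0 := by
  have h2x : (2 : k) • x = 0 := by rw [two_smul, ← eq_neg_iff_add_eq_zero, ← h]
  exact (smul_eq_zero.mp h2x).resolve_left hchar

theorem baumslag_base_case_general (k : Type*) (L : Type*) [Field k] (hchar : (2 : k) ≠ 0)
    [LieRing L] [LieAlgebra k L] (a b t u : L)
    (h1 : ⁅a, b⁆ = 0) (h2 : ⁅⁅a, t⁆, b⁆ = 0) (h3 : ⁅⁅b, t⁆, a⁆ = 0)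
    (h5 : ⁅a, u⁆ = ⁅⁅a, t⁆, t⁆) (h6 : ⁅b, u⁆ = ⁅⁅b, t⁆, t⁆) :
    ⁅⁅a, t⁆, ⁅b, t⁆⁆ = 0 := by
  have hba : ⁅b, a⁆ = 0 := by rw [← lie_skew, h1, neg_zero]
  have hab₁ : ⁅⁅a, t⁆, ⁅b, t⁆⁆ = ⁅a, ⁅⁅b, t⁆, t⁆⁆ := by
    rw [lie_lie_comm_of_lie_eq_zero h2, ← h5, lie_lie_comm_of_lie_eq_zero hba, h6]
  have hba₁ : ⁅⁅b, t⁆, ⁅a, t⁆⁆ = ⁅a, ⁅⁅b, t⁆, t⁆⁆ := lie_lie_comm_of_lie_eq_zero h3 t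
  refine eq_zero_of_eq_neg_of_two_ne_zero hchar ?_
  calc ⁅⁅a, t⁆, ⁅b, t⁆⁆ = -⁅⁅b, t⁆, ⁅a, t⁆⁆ := (lie_skew _ _).symm
    _ = -⁅⁅a, t⁆, ⁅b, t⁆⁆ := by rw [hba₁, hab₁]

/-- Base case of Baumslag's Lemma 5: under the given relations, `[a₁, b₁] = 0`,
i.e. `[[a,t],[b,t]] = 0`, in a Lie algebra over a field of characteristic ≠ 2. -/
theorem baumslag_base_case (k : Type*) (L : Type*) [Field k] (hchar : (2 : k) ≠ 0)
    [LieRing L] [LieAlgebra k L] (a b t u : L)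
    (h1 : ⁅a, b⁆ = 0) (h2 : ⁅⁅a, t⁆, b⁆ = 0) (h3 : ⁅⁅b, t⁆, a⁆ = 0)
    (h4 : ⁅t, u⁆ = 0) (h5 : ⁅a, u⁆ = ⁅⁅a, t⁆, t⁆) (h6 : ⁅b, u⁆ = ⁅⁅b, t⁆, t⁆) :
    ⁅⁅a, t⁆, ⁅b, t⁆⁆ = 0 :=
  baumslag_base_case_general k L hchar a b t u h1 h2 h3 h5 h6
end

section
/- Let L be a Lie algebra over a field of characteristic ≠ 2, and let a, b, t, u ∈ L satisfy [a,b] = 0, [[a,t],b] = 0, [[b,t],a] = 0, [t,u] = 0, [a,u] = [[a,t],t], and [b,u] = [[b,t],t]. Then [a_i, b_j] = 0 for all i, j ≥ 0, where a_i = [a, t, …, t] (i copies of t, left-normed) and b_j = [b, t, …, t] (j copies of t). -/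
/-!
Write `c i j = ⁅aᵢ, bⱼ⁆`. Since `ad t` is a derivation, `c (i+1) j + c i (j+1) = ⁅c i j, t⁆`;
since `u` commutes with `t` and `⁅a, u⁆ = a₂`, `⁅b, u⁆ = b₂`, bracketing with `u` shifts by two:
`c (i+2) j + c i (j+2) = ⁅c i j, u⁆`. So if the antidiagonals `i + j = n` and `n + 1` vanish,
the first rule gives `c (i+2) j = c i (j+2)` on the antidiagonal `n + 2`, the second gives
`c (i+2) j + c i (j+2) = 0` there, and `2 ≠ 0` kills it.
-/

section Antidiagonal

variable {M : Type*} [AddGroup M] {c : ℕ → ℕ → M}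

theorem antidiagonal_succ_succ_eq_zero (htwo : ∀ x : M, x + x = 0 → x = 0)
    (hstep : ∀ i j, c i j = 0 → c (i + 1) j + c i (j + 1) = 0)
    (hstep₂ : ∀ i j, c i j = 0 → c (i + 2) j + c i (j + 2) = 0) {n : ℕ}
    (hn : ∀ i j, i + j = n → c i j = 0) (hn₁ : ∀ i j, i + j = n + 1 → c i j = 0) :
    ∀ i j, i + j = n + 2 → c i j = 0 := by
  have flip : ∀ i j, i + j = n + 1 → c (i + 1) j = -c i (j + 1) := fun i j hij =>
    eq_neg_of_add_eq_zero_left (hstep i j (hn₁ i j hij))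
  have high : ∀ i j, i + j = n → c (i + 2) j = 0 := by
    intro i j hij
    have hsymm : c (i + 2) j = c i (j + 2) := by
      rw [flip (i + 1) j (by omega), flip i (j + 1) (by omega), neg_neg]
    exact htwo _ (hsymm ▸ hstep₂ i j (hn i j hij))
  have hlow : c 1 (n + 1) = 0 := by
    rw [← neg_eq_zero, ← flip 1 n (by omega), high 0 n (by omega)]
  rintro (_ | _ | i) j hij
  · obtain rfl : j = n + 2 := by omega
    rw [← neg_eq_zero, ← flip 0 (n + 1) (by omega), hlow]
  · obtain rfl : j = n + 1 := by omega
    exact hlow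
  · exact high i j (by omega)

theorem eq_zero_of_antidiagonal_steps (htwo : ∀ x : M, x + x = 0 → x = 0)
    (hstep : ∀ i j, c i j = 0 → c (i + 1) j + c i (j + 1) = 0)
    (hstep₂ : ∀ i j, c i j = 0 → c (i + 2) j + c i (j + 2) = 0)
    (h₀₀ : c 0 0 = 0) (h₁₀ : c 1 0 = 0) (i j : ℕ) : c i j = 0 := by
  suffices ∀ n i j, i + j = n → c i j = 0 from this _ i j rfl
  intro n
  induction n using Nat.twoStepInduction with
  | zero =>
    intro i j hij
    obtain ⟨rfl, rfl⟩ : i = 0 ∧ j = 0 := by omega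
    exact h₀₀
  | one =>
    have h₀₁ : c 0 1 = 0 := by simpa only [h₁₀, zero_add] using hstep 0 0 h₀₀
    rintro (_ | _ | i) j hij
    · obtain rfl : j = 1 := by omega
      exact h₀₁
    · obtain rfl : j = 0 := by omega
      exact h₁₀
    · omega
  | more n hn hn₁ => exact antidiagonal_succ_succ_eq_zero htwo hstep hstep₂ hn hn₁

end Antidiagonal

section LieRing

variable {L : Type*} [LieRing L]

theorem lie_lie_swap_right (x y z : L) : ⁅⁅x, y⁆, z⁆ = ⁅⁅x, z⁆, y⁆ + ⁅x, ⁅y, z⁆⁆ := by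
  rw [lie_lie, ← lie_skew y ⁅x, z⁆]
  abel

theorem iterate_lie_right_lie_comm {t u : L} (htu : ⁅t, u⁆ = 0) (n : ℕ) (x : L) :
    ⁅(fun y => ⁅y, t⁆)^[n] x, u⁆ = (fun y => ⁅y, t⁆)^[n] ⁅x, u⁆ := by
  have hcomm : Function.Commute (fun y : L => ⁅y, t⁆) (fun y => ⁅y, u⁆) := fun y => by
    simp only [lie_lie_swap_right y t u, htu, lie_zero, add_zero]
  exact (hcomm.iterate_left n x).symm

end LieRing

theorem baumslag_lemma5_general (k : Type*) (L : Type*) [Field k] (hchar : (2 : k) ≠ 0)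
    [LieRing L] [LieAlgebra k L] (a b t u : L)
    (h1 : ⁅a, b⁆ = 0) (h2 : ⁅⁅a, t⁆, b⁆ = 0)
    (h4 : ⁅t, u⁆ = 0) (h5 : ⁅a, u⁆ = ⁅⁅a, t⁆, t⁆) (h6 : ⁅b, u⁆ = ⁅⁅b, t⁆, t⁆) :
    ∀ i j : ℕ, ⁅(fun x => ⁅x, t⁆)^[i] a, (fun x => ⁅x, t⁆)^[j] b⁆ = 0 := by
  set f : L → L := fun x => ⁅x, t⁆
  have hshift_a (i : ℕ) : ⁅f^[i] a, u⁆ = f^[i + 2] a := by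
    rw [iterate_lie_right_lie_comm h4, h5, Function.iterate_add_apply]; rfl
  have hshift_b (j : ℕ) : ⁅f^[j] b, u⁆ = f^[j + 2] b := by
    rw [iterate_lie_right_lie_comm h4, h6, Function.iterate_add_apply]; rfl
  have htwo (x : L) (hx : x + x = 0) : x = 0 := by
    rw [← two_smul k x] at hx
    exact (smul_eq_zero.mp hx).resolve_left hchar
  refine eq_zero_of_antidiagonal_steps (c := fun i j => ⁅f^[i] a, f^[j] b⁆) htwo ?_ ?_ h1 h2
  · intro i j hij
    rw [Function.iterate_succ_apply', Function.iterate_succ_apply', ← lie_lie_swap_right, hij,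
      zero_lie]
  · intro i j hij
    rw [← hshift_a, ← hshift_b, ← lie_lie_swap_right, hij, zero_lie]

/-- Lemma 5 of Baumslag (1977): with `aᵢ = [a,t,…,t]` (`i` copies of `t`, left-normed)
and `bⱼ = [b,t,…,t]`, under the given relations one has `[aᵢ, bⱼ] = 0` for all
`i, j ≥ 0`, in a Lie algebra over a field of characteristic ≠ 2. -/
theorem baumslag_lemma5 (k : Type*) (L : Type*) [Field k] (hchar : (2 : k) ≠ 0)
    [LieRing L] [LieAlgebra k L] (a b t u : L)
    (h1 : ⁅a, b⁆ = 0) (h2 : ⁅⁅a, t⁆, b⁆ = 0) (h3 : ⁅⁅b, t⁆, a⁆ = 0)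
    (h4 : ⁅t, u⁆ = 0) (h5 : ⁅a, u⁆ = ⁅⁅a, t⁆, t⁆) (h6 : ⁅b, u⁆ = ⁅⁅b, t⁆, t⁆) :
    ∀ i j : ℕ, ⁅(fun x => ⁅x, t⁆)^[i] a, (fun x => ⁅x, t⁆)^[j] b⁆ = 0 :=
  baumslag_lemma5_general k L hchar a b t u h1 h2 h4 h5 h6
end
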